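/- arXiv:1308.3504 — 2 statements merged into one kernel-verified Lean document; each statement's English description precedes it below -/
import Mathlib

section
/- Let m ≤ n, let β^1,…,β^m ∈ Δ_{n−1}, and for each i ∈ {1,…,m} let u^i ∈ ℝ^n be an EVV with respect to β^i. Then v^α ≤ min_{1≤i≤m} (∑_{j=1}^n β^i_j u^i_j) / (∑_{j=1}^n β^i_j α_j). -/
open MeasureTheory

/-- A measurable `n`-partition of the whole space `C`. -/
def IsMPartition {C : Type*} [MeasurableSpace C] {n : ℕ} (A : Fin n → Set C) : Prop :=
  (∀ i, MeasurableSet (A i)) ∧ Pairwise (Function.onFun Disjoint A) ∧ (⋃ i, A i) = Set.univ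

/-- The `α`-optimal value `v^α`. -/
noncomputable def vopt {C : Type*} [MeasurableSpace C] {n : ℕ} (μ : Fin n → Measure C)
    (α : Fin n → ℝ) : ℝ :=
  sSup {r : ℝ | ∃ A : Fin n → Set C, IsMPartition A ∧ r = ⨅ i, (μ i (A i)).toReal / α i}

/-- `u` is an efficient value vector (EVV) with respect to `β`: it is the vector of values
`μ i (A i)` of a measurable partition maximizing `∑ i, β i * μ i (A i)`. -/
def IsEVV {C : Type*} [MeasurableSpace C] {n : ℕ} (μ : Fin n → Measure C)
    (β : Fin n → ℝ) (u : Fin n → ℝ) : Prop :=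
  ∃ A : Fin n → Set C, IsMPartition A ∧ (∀ i, u i = (μ i (A i)).toReal) ∧
    ∀ B : Fin n → Set C, IsMPartition B →
      ∑ i, β i * (μ i (B i)).toReal ≤ ∑ i, β i * (μ i (A i)).toReal

/-- Upper bound for `v^α` from any family of EVVs (Theorem 1(ii), first part). -/
theorem vopt_le_of_EVVs {C : Type*} [MeasurableSpace C] {n m : ℕ} (hn : 2 ≤ n) (hmn : m ≤ n)
    (μ : Fin n → Measure C) [∀ i, IsFiniteMeasure (μ i)] (hna : ∀ i, NoAtoms (μ i))
    (α : Fin n → ℝ) (hpos : ∀ i, 0 < α i) (hsum : ∑ i, α i = 1)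
    (β : Fin m → (Fin n → ℝ)) (hβ : ∀ i, β i ∈ stdSimplex ℝ (Fin n))
    (u : Fin m → (Fin n → ℝ)) (hu : ∀ i, IsEVV μ (β i) (u i)) :
    ∀ i : Fin m, vopt μ α ≤ (∑ j, β i j * u i j) / (∑ j, β i j * α j) := by
  intro i
  obtain ⟨Ai, hAi, huA, hopt⟩ := hu i
  have hβ0 : ∀ j, 0 ≤ β i j := fun j => (hβ i).1 j
  have hβ1 : ∑ j, β i j = 1 := (hβ i).2
  have hden : 0 < ∑ j, β i j * α j := by
    obtain ⟨j0, hj0⟩ : ∃ j, β i j ≠ 0 := by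
      by_contra h
      push_neg at h
      simp [h] at hβ1
    calc (0:ℝ) < β i j0 * α j0 :=
          mul_pos ((hβ0 j0).lt_of_ne (Ne.symm hj0)) (hpos j0)
      _ ≤ ∑ j, β i j * α j :=
          Finset.single_le_sum (fun j _ => mul_nonneg (hβ0 j) (hpos j).le)
            (Finset.mem_univ j0)
  have hnumnn : 0 ≤ ∑ j, β i j * u i j := by
    refine Finset.sum_nonneg fun j _ => mul_nonneg (hβ0 j) ?_
    rw [huA j]; exact ENNReal.toReal_nonneg
  apply Real.sSup_le
  · rintro r ⟨A, hA, rfl⟩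
    have hbdd : BddBelow (Set.range fun j => (μ j (A j)).toReal / α j) :=
      ⟨0, by rintro x ⟨j, rfl⟩; exact div_nonneg ENNReal.toReal_nonneg (hpos j).le⟩
    set c := ⨅ j, (μ j (A j)).toReal / α j with hc
    have hcle : ∀ j, c * α j ≤ (μ j (A j)).toReal := by
      intro j
      have h := ciInf_le hbdd j
      rwa [le_div_iff₀ (hpos j)] at h
    rw [le_div_iff₀ hden]
    calc c * ∑ j, β i j * α j = ∑ j, β i j * (c * α j) := by
          rw [Finset.mul_sum]; exact Finset.sum_congr rfl fun j _ => by ring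
      _ ≤ ∑ j, β i j * (μ j (A j)).toReal :=
          Finset.sum_le_sum fun j _ => mul_le_mul_of_nonneg_left (hcle j) (hβ0 j)
      _ ≤ ∑ j, β i j * (μ j (Ai j)).toReal := hopt A hA
      _ = ∑ j, β i j * u i j := by
          exact Finset.sum_congr rfl fun j _ => by rw [huA j]
  · exact div_nonneg hnumnn hden.le
end

section
/- Let n ≥ 2, let u^1,…,u^n be affinely independent points of ℝ^{n−1}, and let u* ∈ ℝ^{n−1} be a point not belonging to the convex hull of {u^1,…,u^n}. Then for each j ∈ {1,…,n} there exist k ∈ {1,…,n} with k ≠ j and an affine function f : ℝ^{n−1} → ℝ, not identically zero, such that f(u*) = 0, f(u^i) = 0 for every i ∉ {j,k}, f(u^i) ≥ 0 for every i ∈ {1,…,n} (so the convex hull of {u^1,…,u^n} is contained in the halfspace {x : f(x) ≥ 0}), and f(u^j) > 0. -/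
/-- Appendix Lemma: given `n` affinely independent points of `ℝ^{n-1}` and a point `u*`
outside their convex hull, for each `j` there are `k ≠ j` and a nonzero affine function
vanishing at `u*` and at every `uᵢ` with `i ∉ {j, k}`, nonnegative on all the `uᵢ`
(hence on their convex hull), and strictly positive at `u^j`. -/
theorem supporting_hyperplane_through_outside_point {n : ℕ} (hn : 2 ≤ n)
    (u : Fin n → (Fin (n - 1) → ℝ)) (hu : AffineIndependent ℝ u)
    (ustar : Fin (n - 1) → ℝ) (hustar : ustar ∉ convexHull ℝ (Set.range u)) :
    ∀ j : Fin n, ∃ k : Fin n, k ≠ j ∧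
      ∃ (c : Fin (n - 1) → ℝ) (b : ℝ), (c ≠ 0 ∨ b ≠ 0) ∧
        (∑ l, c l * ustar l) + b = 0 ∧
        (∀ i : Fin n, i ≠ j → i ≠ k → (∑ l, c l * u i l) + b = 0) ∧
        (∀ i : Fin n, 0 ≤ (∑ l, c l * u i l) + b) ∧
        (convexHull ℝ (Set.range u) ⊆ {x | 0 ≤ (∑ l, c l * x l) + b}) ∧
        0 < (∑ l, c l * u j l) + b := by
  have hcard : Fintype.card (Fin n) = Module.finrank ℝ (Fin (n - 1) → ℝ) + 1 := by
    simp [Module.finrank_pi]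
    omega
  have htot : affineSpan ℝ (Set.range u) = ⊤ :=
    hu.affineSpan_eq_top_iff_card_eq_finrank_add_one.mpr hcard
  let B : AffineBasis (Fin n) ℝ (Fin (n - 1) → ℝ) := ⟨u, hu, htot⟩
  have hBu : ∀ i, B i = u i := fun i => rfl
  have hrange : Set.range (⇑B) = Set.range u := rfl
  set lam : Fin n → ℝ := fun i => B.coord i ustar with hlam
  have hsum : ∑ i, lam i = 1 := B.sum_coord_apply_eq_one ustar
  have hneg : ∃ k, lam k < 0 := by
    by_contra h
    push_neg at h
    apply hustar
    rw [← hrange, B.convexHull_eq_nonneg_coord]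
    exact h
  intro j
  obtain ⟨k, hkj, a, b', ha, hb', hzero⟩ :
      ∃ k, k ≠ j ∧ ∃ a b' : ℝ, 0 < a ∧ 0 ≤ b' ∧ a * lam j + b' * lam k = 0 := by
    rcases le_or_gt 0 (lam j) with hj | hj
    · obtain ⟨k0, hk0⟩ := hneg
      have hkj : k0 ≠ j := by
        intro h; rw [h] at hk0; linarith
      exact ⟨k0, hkj, -lam k0, lam j, by linarith, hj, by ring⟩
    · have : ∃ k, k ≠ j ∧ 0 < lam k := by
        by_contra h
        push_neg at h
        have : ∑ i, lam i ≤ 0 := by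
          have : ∀ i ∈ Finset.univ, lam i ≤ 0 := by
            intro i _
            rcases eq_or_ne i j with rfl | hij
            · linarith
            · exact h i hij
          exact Finset.sum_nonpos this
        linarith
      obtain ⟨k, hkj, hk⟩ := this
      refine ⟨k, hkj, lam k, -lam j, hk, by linarith, by ring⟩
  set f : (Fin (n - 1) → ℝ) →ᵃ[ℝ] ℝ := a • B.coord j + b' • B.coord k with hf
  have hfapp : ∀ x, f x = a * B.coord j x + b' * B.coord k x := fun x => rfl
  set c : Fin (n - 1) → ℝ := fun l => f.linear (fun j' => if l = j' then 1 else 0) with hc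
  set b : ℝ := f 0 with hb
  have key : ∀ x, (∑ l, c l * x l) + b = f x := by
    intro x
    have h1 : f.linear x = ∑ l, c l * x l := by
      rw [LinearMap.pi_apply_eq_sum_univ f.linear x]
      exact Finset.sum_congr rfl fun l _ => by rw [smul_eq_mul, mul_comm]
    have h2 : f x = f.linear x + f 0 := congrFun f.decomp x
    rw [h2, h1, hb]
  have hcoord : ∀ i i' : Fin n, B.coord i (u i') = if i = i' then 1 else 0 := by
    intro i i'
    rw [← hBu i', B.coord_apply]
  have hfu : ∀ i : Fin n, f (u i) = (if j = i then a else 0) + (if k = i then b' else 0) := by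
    intro i
    rw [hfapp, hcoord, hcoord]
    by_cases h1 : j = i <;> by_cases h2 : k = i <;> simp [h1, h2]
  have hfuj : f (u j) = a := by
    rw [hfu j, if_pos rfl, if_neg hkj]; ring
  refine ⟨k, hkj, c, b, ?_, ?_, ?_, ?_, ?_, ?_⟩
  · by_contra h
    push_neg at h
    obtain ⟨hc0, hb0⟩ := h
    have : (∑ l, c l * u j l) + b = 0 := by
      simp [hc0, hb0]
    rw [key (u j), hfuj] at this
    linarith
  · rw [key ustar, hfapp]
    exact hzero
  · intro i hij hik
    rw [key (u i), hfu i, if_neg (fun h => hij h.symm), if_neg (fun h => hik h.symm)]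
    ring
  · intro i
    rw [key (u i), hfu i]
    have h1 : (0:ℝ) ≤ if j = i then a else 0 := by split <;> [linarith; exact le_rfl]
    have h2 : (0:ℝ) ≤ if k = i then b' else 0 := by split <;> [exact hb'; exact le_rfl]
    linarith
  · apply convexHull_min
    · intro x hx
      obtain ⟨i, rfl⟩ := hx
      rw [Set.mem_setOf_eq, key (u i), hfu i]
      have h1 : (0:ℝ) ≤ if j = i then a else 0 := by split <;> [linarith; exact le_rfl]
      have h2 : (0:ℝ) ≤ if k = i then b' else 0 := by split <;> [exact hb'; exact le_rfl]
      linarith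
    · have : {x | 0 ≤ (∑ l, c l * x l) + b} = f ⁻¹' (Set.Ici 0) := by
        ext x
        simp [key x]
      rw [this]
      exact (convex_Ici (0:ℝ)).affine_preimage f
  · rw [key (u j), hfuj]
    exact ha
end
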